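/- Let y ∈ ℝⁿ and λ_L ≥ 0, λ_NI ≥ 0, and let 0 ≤ λ_F < λ_F*. If the unique minimizer of the one-dimensional fused lasso nearly-isotonic objective satisfies β̂(y, λ_F, λ_L, λ_NI)_i = β̂(y, λ_F, λ_L, λ_NI)_{i+1} for some index 1 ≤ i ≤ n−1, then also β̂(y, λ_F*, λ_L, λ_NI)_i = β̂(y, λ_F*, λ_L, λ_NI)_{i+1}; that is, increasing the fusion parameter λ_F can only join constant regions of the solution, not split them. -/

import Mathlib

/-!
Both objectives have the form `∑ⱼ ((Yⱼ - Bⱼ)² / 2 + κ(Bⱼ)) + ∑ₖ ρ(Bₖ - Bₖ₊₁)` with convex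
two-slope kinks `κ` (slopes `-λ_L, λ_L`) and `ρ` (slopes `-λ_F, λ_F + λ_NI`), and raising `λ_F`
makes `ρ` strictly steeper on both sides. A minimiser carries a dual certificate `γ`: `γ` vanishes
at both ends, `γₖ₊₁` is a subgradient of `ρ` at the `k`-th jump and `Yⱼ - Bⱼ + γⱼ - γⱼ₊₁` one of
`κ` at `Bⱼ`. Its existence comes from shifting `B` up or down on windows of consecutive indices:
the resulting one-sided derivative inequalities are exactly what a path through the prescribed
intervals needs.

For the two parameters put `A = γ - γ'`. If `b` is fused at an edge where `b'` jumps down, then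
`A ≤ λ_F - λ_F' < 0` on that edge. On the stretch around it on which `A` strictly decreases towards
the edge from both sides, `A` stays below this level, which forbids upward jumps of `b'` and
downward jumps of `b`; at the two ends of the stretch the monotonicity of `x ↦ x + ∂κ(x)`
compares `b` with `b'`. Chaining these inequalities gives `b'ₑ ≤ b'ₑ₊₁`, a contradiction. An upward
jump is the same situation for the mirrored problem `(y, β) ↦ (-y, -β)`.
-/

open Finset

/-- The one-dimensional fused lasso nearly-isotonic objective
`F(β) = (1/2)Σᵢ(yᵢ−βᵢ)² + λ_F Σᵢ|βᵢ−βᵢ₊₁| + λ_L Σᵢ|βᵢ| + λ_NI Σᵢ max(βᵢ−βᵢ₊₁,0)`. -/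
noncomputable def flni1 {n : ℕ} (y : Fin (n + 1) → ℝ) (lF lL lNI : ℝ)
    (β : Fin (n + 1) → ℝ) : ℝ :=
  (1 / 2) * ∑ i, (y i - β i) ^ 2
    + lF * ∑ i : Fin n, |β i.castSucc - β i.succ|
    + lL * ∑ i, |β i|
    + lNI * ∑ i : Fin n, max (β i.castSucc - β i.succ) 0

open Filter Topology

namespace FusedLassoNI

noncomputable section

def kink (l r x : ℝ) : ℝ := r * max x 0 + l * min x 0

def lslope (l r x : ℝ) : ℝ := if 0 < x then r else l

def rslope (l r x : ℝ) : ℝ := if x < 0 then l else r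

/-- The one-sided directional derivative of `kink l r` at `x` in the direction `s`. -/
def kinkDir (l r x s : ℝ) : ℝ := rslope l r x * max s 0 + lslope l r x * min s 0

def kinkSubdiff (l r x : ℝ) : Set ℝ := Set.Icc (lslope l r x) (rslope l r x)

section Kink

variable {l r x : ℝ}

lemma kink_of_nonneg (hx : 0 ≤ x) : kink l r x = r * x := by
  simp [kink, hx]

lemma kink_of_nonpos (hx : x ≤ 0) : kink l r x = l * x := by
  simp [kink, hx]

lemma kink_neg (l r x : ℝ) : kink (-r) (-l) x = kink l r (-x) := by
  rcases le_total x 0 with hx | hx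
  · rw [kink_of_nonpos hx, kink_of_nonneg (neg_nonneg.mpr hx)]; ring
  · rw [kink_of_nonneg hx, kink_of_nonpos (neg_nonpos.mpr hx)]; ring

lemma kink_neg_add (a c x : ℝ) : kink (-a) (a + c) x = a * |x| + c * max x 0 := by
  rcases le_total x 0 with hx | hx
  · rw [kink_of_nonpos hx, abs_of_nonpos hx, max_eq_right hx]; ring
  · rw [kink_of_nonneg hx, abs_of_nonneg hx, max_eq_left hx]; ring

lemma kink_neg_self (a x : ℝ) : kink (-a) a x = a * |x| := by
  simpa using kink_neg_add a 0 x

@[simp] lemma kinkDir_zero (l r x : ℝ) : kinkDir l r x 0 = 0 := by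
  simp [kinkDir]

@[simp] lemma kinkDir_one (l r x : ℝ) : kinkDir l r x 1 = rslope l r x := by
  simp [kinkDir]

@[simp] lemma kinkDir_neg_one (l r x : ℝ) : kinkDir l r x (-1) = -lslope l r x := by
  simp [kinkDir]

lemma kink_add_mul_eventuallyEq (l r x s : ℝ) :
    ∀ᶠ t in 𝓝[>] 0, kink l r (x + t * s) = kink l r x + t * kinkDir l r x s := by
  have hlim : Tendsto (fun t : ℝ => x + t * s) (𝓝[>] 0) (𝓝 x) := by
    have hc : Continuous (fun t : ℝ => x + t * s) := by fun_prop
    exact tendsto_nhdsWithin_of_tendsto_nhds (hc.tendsto' 0 x (by simp))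
  rcases lt_trichotomy x 0 with hx | rfl | hx
  · filter_upwards [hlim.eventually (gt_mem_nhds hx)] with t ht
    rw [kink_of_nonpos ht.le, kink_of_nonpos hx.le, kinkDir, rslope, lslope, if_pos hx,
      if_neg (not_lt.mpr hx.le), ← mul_add, max_add_min, add_zero]
    ring
  · filter_upwards [self_mem_nhdsWithin] with t (ht : 0 < t)
    simp only [kink, kinkDir, lslope, rslope, lt_irrefl, if_false, zero_add, max_self, min_self,
      mul_zero, add_zero]
    have hmax : max (t * s) 0 = t * max s 0 := by rw [mul_max_of_nonneg _ _ ht.le, mul_zero]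
    have hmin : min (t * s) 0 = t * min s 0 := by rw [mul_min_of_nonneg _ _ ht.le, mul_zero]
    rw [hmax, hmin]
    ring
  · filter_upwards [hlim.eventually (lt_mem_nhds hx)] with t ht
    rw [kink_of_nonneg ht.le, kink_of_nonneg hx.le, kinkDir, rslope, lslope, if_pos hx,
      if_neg (not_lt.mpr hx.le), ← mul_add, max_add_min, add_zero]
    ring

lemma lslope_le_rslope (hlr : l ≤ r) (x : ℝ) : lslope l r x ≤ rslope l r x := by
  unfold lslope rslope
  split_ifs <;> first | rfl | exact hlr | linarith

lemma kinkSubdiff_of_pos (hx : 0 < x) : kinkSubdiff l r x = {r} := by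
  simp [kinkSubdiff, lslope, rslope, hx, not_lt.mpr hx.le]

lemma kinkSubdiff_of_neg (hx : x < 0) : kinkSubdiff l r x = {l} := by
  simp [kinkSubdiff, lslope, rslope, hx, not_lt.mpr hx.le]

lemma kinkSubdiff_subset (hlr : l ≤ r) (x : ℝ) : kinkSubdiff l r x ⊆ Set.Icc l r := by
  refine Set.Icc_subset_Icc ?_ ?_ <;> simp only [lslope, rslope] <;> split_ifs <;> simp [hlr]

lemma le_of_add_le_add_of_mem_kinkSubdiff (hlr : l ≤ r) {x' g g' : ℝ}
    (hg : g ∈ kinkSubdiff l r x) (hg' : g' ∈ kinkSubdiff l r x') (h : x + g ≤ x' + g') :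
    x ≤ x' := by
  by_contra! hx
  have : rslope l r x' ≤ lslope l r x := by
    unfold lslope rslope
    split_ifs <;> first | rfl | exact hlr | linarith
  linarith [hg.1, hg'.2]

end Kink

section Feasibility

variable {lo hi u v : ℕ → ℝ} {N : ℕ}

lemma add_sum_le_add_sum_of_windows (huv : ∀ k < N, u k ≤ v k)
    (hup : ∀ c k, c ≤ k → k ≤ N → ∑ j ∈ Ico c k, u j ≤ hi k - lo c)
    (hdown : ∀ c k, c ≤ k → k ≤ N → lo k - hi c ≤ ∑ j ∈ Ico c k, v j)
    {c c' : ℕ} (hc : c ≤ N) (hc' : c' ≤ N) :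
    lo c + ∑ j ∈ Ico c N, u j ≤ hi c' + ∑ j ∈ Ico c' N, v j := by
  rcases le_total c c' with h | h
  · have huv' : ∑ j ∈ Ico c' N, u j ≤ ∑ j ∈ Ico c' N, v j :=
      sum_le_sum fun j hj => huv j (mem_Ico.1 hj).2
    rw [← sum_Ico_consecutive u h hc']
    linarith [hup c c' h hc']
  · have huv' : ∑ j ∈ Ico c N, u j ≤ ∑ j ∈ Ico c N, v j :=
      sum_le_sum fun j hj => huv j (mem_Ico.1 hj).2
    rw [← sum_Ico_consecutive v h hc]
    linarith [hdown c' c h hc]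

theorem exists_path_of_windows (huv : ∀ k < N, u k ≤ v k)
    (hup : ∀ c k, c ≤ k → k ≤ N → ∑ j ∈ Ico c k, u j ≤ hi k - lo c)
    (hdown : ∀ c k, c ≤ k → k ≤ N → lo k - hi c ≤ ∑ j ∈ Ico c k, v j)
    (x : ℝ) (hx : ∀ c ≤ N, lo c + ∑ j ∈ Ico c N, u j ≤ x ∧
      x ≤ hi c + ∑ j ∈ Ico c N, v j) :
    ∃ γ : ℕ → ℝ, γ N = x ∧ (∀ k ≤ N, γ k ∈ Set.Icc (lo k) (hi k)) ∧
      ∀ k < N, γ (k + 1) - γ k ∈ Set.Icc (u k) (v k) := by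
  induction N generalizing x with
  | zero =>
    refine ⟨fun _ => x, rfl, fun k hk => ?_, fun k hk => absurd hk k.not_lt_zero⟩
    simpa [Nat.le_zero.1 hk] using hx 0 le_rfl
  | succ N ih =>
    have huv' : ∀ k < N, u k ≤ v k := fun k hk => huv k (by omega)
    have hup' : ∀ c k, c ≤ k → k ≤ N → ∑ j ∈ Ico c k, u j ≤ hi k - lo c :=
      fun c k h1 h2 => hup c k h1 (by omega)
    have hdown' : ∀ c k, c ≤ k → k ≤ N → lo k - hi c ≤ ∑ j ∈ Ico c k, v j :=
      fun c k h1 h2 => hdown c k h1 (by omega)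
    have hxN : ∀ c ≤ N, lo c + ∑ j ∈ Ico c N, u j + u N ≤ x ∧
        x ≤ hi c + ∑ j ∈ Ico c N, v j + v N := fun c hc => by
      simpa only [sum_Ico_succ_top hc, add_assoc] using hx c (by omega)
    -- `x'` is the largest lower bound on the value at `N`; the windows keep it below every
    -- upper bound.
    set L : ℕ → ℝ := fun c => lo c + ∑ j ∈ Ico c N, u j
    set x' := max (x - v N) ((range (N + 1)).sup' nonempty_range_add_one L)
    have hLx' : ∀ c ≤ N, L c ≤ x' := fun c hc =>
      le_max_of_le_right (le_sup' L (mem_range.2 (by omega)))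
    have hx'H : ∀ c ≤ N, x' ≤ hi c + ∑ j ∈ Ico c N, v j := fun c hc =>
      max_le (by linarith [(hxN c hc).2]) (sup'_le _ _ fun c' hc' =>
        add_sum_le_add_sum_of_windows huv' hup' hdown' (Nat.lt_succ_iff.1 (mem_range.1 hc')) hc)
    have hvx' : x - v N ≤ x' := le_max_left _ _
    have hx'u : x' ≤ x - u N := max_le (by linarith [huv N (by omega)])
      (sup'_le _ _ fun c hc => by linarith [(hxN c (Nat.lt_succ_iff.1 (mem_range.1 hc))).1])
    obtain ⟨γ, hγN, hγ, hγd⟩ :=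
      ih huv' hup' hdown' x' fun c hc => ⟨hLx' c hc, hx'H c hc⟩
    refine ⟨Function.update γ (N + 1) x, by simp, fun k hk => ?_, fun k hk => ?_⟩
    · rcases hk.lt_or_eq with hk | rfl
      · rw [Function.update_of_ne (by omega)]
        exact hγ k (by omega)
      · simpa using hx (N + 1) le_rfl
    · rcases (Nat.lt_succ_iff.1 hk).lt_or_eq with hk | rfl
      · rw [Function.update_of_ne (by omega), Function.update_of_ne (by omega)]
        exact hγd k hk
      · simp only [Function.update_self, Function.update_of_ne (by omega : k ≠ k + 1), hγN]
        exact ⟨by linarith, by linarith⟩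

end Feasibility

section PathObjective

variable (n : ℕ) (Y : ℕ → ℝ) (p q lo hi : ℝ)

def pathObj (B : ℕ → ℝ) : ℝ :=
  ∑ j ∈ range (n + 1), ((Y j - B j) ^ 2 / 2 + kink p q (B j))
    + ∑ k ∈ range n, kink lo hi (B k - B (k + 1))

def pathObjDir (B δ : ℕ → ℝ) : ℝ :=
  ∑ j ∈ range (n + 1), (-(Y j - B j) * δ j + kinkDir p q (B j) (δ j))
    + ∑ k ∈ range n, kinkDir lo hi (B k - B (k + 1)) (δ k - δ (k + 1))

lemma pathObj_add_smul_eventuallyEq (B δ : ℕ → ℝ) :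
    ∀ᶠ t in 𝓝[>] 0, pathObj n Y p q lo hi (B + t • δ) =
      pathObj n Y p q lo hi B + t * pathObjDir n Y p q lo hi B δ
        + t ^ 2 * ∑ j ∈ range (n + 1), δ j ^ 2 / 2 := by
  have hv := (eventually_all_finset (range (n + 1))).2 fun j _ =>
    kink_add_mul_eventuallyEq p q (B j) (δ j)
  have he := (eventually_all_finset (range n)).2 fun k _ =>
    kink_add_mul_eventuallyEq lo hi (B k - B (k + 1)) (δ k - δ (k + 1))
  filter_upwards [hv, he] with t hv he
  have hvert :
      ∑ j ∈ range (n + 1), ((Y j - (B + t • δ) j) ^ 2 / 2 + kink p q ((B + t • δ) j)) =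
        ∑ j ∈ range (n + 1), (((Y j - B j) ^ 2 / 2 + kink p q (B j))
          + t * (-(Y j - B j) * δ j + kinkDir p q (B j) (δ j)) + t ^ 2 * (δ j ^ 2 / 2)) := by
    refine sum_congr rfl fun j hj => ?_
    simp only [Pi.add_apply, Pi.smul_apply, smul_eq_mul, hv j hj]
    ring
  have hedge : ∑ k ∈ range n, kink lo hi ((B + t • δ) k - (B + t • δ) (k + 1))
      = ∑ k ∈ range n, (kink lo hi (B k - B (k + 1))
        + t * kinkDir lo hi (B k - B (k + 1)) (δ k - δ (k + 1))) := by
    refine sum_congr rfl fun k hk => ?_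
    rw [← he k hk]
    simp only [Pi.add_apply, Pi.smul_apply, smul_eq_mul]
    ring_nf
  rw [pathObj, hvert, hedge]
  simp only [pathObj, pathObjDir, sum_add_distrib, ← mul_sum]
  ring

lemma nonneg_of_eventually_nonneg_mul_add_sq {a c : ℝ}
    (h : ∀ᶠ t in 𝓝[>] (0 : ℝ), 0 ≤ t * a + t ^ 2 * c) : 0 ≤ a := by
  have hlim : Tendsto (fun t : ℝ => a + t * c) (𝓝[>] 0) (𝓝 a) := by
    have hc : Continuous (fun t : ℝ => a + t * c) := by fun_prop
    exact tendsto_nhdsWithin_of_tendsto_nhds (hc.tendsto' 0 a (by simp))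
  refine ge_of_tendsto hlim ?_
  filter_upwards [h, self_mem_nhdsWithin] with t ht (htpos : 0 < t)
  refine nonneg_of_mul_nonneg_right ?_ htpos
  linarith

variable {n Y p q lo hi}

lemma pathObjDir_nonneg {B : ℕ → ℝ}
    (hB : ∀ C, pathObj n Y p q lo hi B ≤ pathObj n Y p q lo hi C) (δ : ℕ → ℝ) :
    0 ≤ pathObjDir n Y p q lo hi B δ := by
  refine nonneg_of_eventually_nonneg_mul_add_sq (c := ∑ j ∈ range (n + 1), δ j ^ 2 / 2) ?_
  filter_upwards [pathObj_add_smul_eventuallyEq n Y p q lo hi B δ] with t ht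
  linarith [hB (B + t • δ)]

variable (n lo hi) in
/-- The term contributed to `pathObjDir` by the edge ending at vertex `m`, when the direction
jumps by `s` across it; the positions `0` and `n + 1` carry no edge. -/
def boundaryDir (B : ℕ → ℝ) : ℕ → ℝ → ℝ
  | 0, _ => 0
  | k + 1, s => if k < n then kinkDir lo hi (B k - B (k + 1)) s else 0

lemma sum_range_ite_eq_boundaryDir (B : ℕ → ℝ) (m : ℕ) (s : ℝ) :
    ∑ k ∈ range n, (if k + 1 = m then kinkDir lo hi (B k - B (k + 1)) s else 0) =
      boundaryDir n lo hi B m s := by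
  cases m <;> simp [boundaryDir]

lemma pathObjDir_indicator_Ico (B : ℕ → ℝ) {c k : ℕ} (hck : c < k) (hk : k ≤ n + 1)
    (σ : ℝ) :
    pathObjDir n Y p q lo hi B (fun j => if j ∈ Ico c k then σ else 0) =
      ∑ j ∈ Ico c k, (-(Y j - B j) * σ + kinkDir p q (B j) σ)
        + boundaryDir n lo hi B k σ + boundaryDir n lo hi B c (-σ) := by
  rw [pathObjDir, add_assoc]
  congr 1
  · have hsub : Ico c k ⊆ range (n + 1) := fun j hj => by
      simp only [mem_Ico, mem_range] at hj ⊢; omega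
    calc _ = ∑ j ∈ range (n + 1),
          if j ∈ Ico c k then -(Y j - B j) * σ + kinkDir p q (B j) σ else 0 :=
          sum_congr rfl fun j _ => by split_ifs <;> simp
      _ = _ := by rw [sum_ite_mem, inter_eq_right.mpr hsub]
  · rw [← sum_range_ite_eq_boundaryDir, ← sum_range_ite_eq_boundaryDir, ← sum_add_distrib]
    refine sum_congr rfl fun j _ => ?_
    simp only [mem_Ico]
    split_ifs <;> first | omega | simp

theorem exists_dual_of_isMin (hpq : p ≤ q) (hlohi : lo ≤ hi) {B : ℕ → ℝ}
    (hB : ∀ C, pathObj n Y p q lo hi B ≤ pathObj n Y p q lo hi C) :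
    ∃ γ : ℕ → ℝ, γ 0 = 0 ∧ γ (n + 1) = 0 ∧
      (∀ k < n, γ (k + 1) ∈ kinkSubdiff lo hi (B k - B (k + 1))) ∧
      ∀ j ≤ n, Y j - B j + γ j - γ (j + 1) ∈ kinkSubdiff p q (B j) := by
  -- `[dlo m, dhi m]` is the subdifferential at the edge ending at `m`; shifting `B` by `±1` on
  -- `Ico c k` gives the window inequalities.
  set dlo : ℕ → ℝ := fun m => -boundaryDir n lo hi B m (-1)
  set dhi : ℕ → ℝ := fun m => boundaryDir n lo hi B m 1
  set u : ℕ → ℝ := fun j => Y j - B j - rslope p q (B j)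
  set v : ℕ → ℝ := fun j => Y j - B j - lslope p q (B j)
  have hd : ∀ m, dlo m ≤ dhi m := by
    rintro (_ | k)
    · simp [dlo, dhi, boundaryDir]
    · simp only [dlo, dhi, boundaryDir]
      split_ifs <;> simp [lslope_le_rslope hlohi]
  have hend : dlo (n + 1) = 0 ∧ dhi (n + 1) = 0 := by simp [dlo, dhi, boundaryDir]
  have hup : ∀ c k, c ≤ k → k ≤ n + 1 → ∑ j ∈ Ico c k, u j ≤ dhi k - dlo c := by
    intro c k hck hk
    rcases hck.lt_or_eq with hck | rfl
    · have := pathObjDir_nonneg hB (fun j => if j ∈ Ico c k then 1 else 0)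
      have hsum : ∑ j ∈ Ico c k, (-(Y j - B j) * 1 + kinkDir p q (B j) 1) =
          -∑ j ∈ Ico c k, u j := by
        rw [← sum_neg_distrib]
        exact sum_congr rfl fun j _ => by simp only [u, kinkDir_one]; ring
      rw [pathObjDir_indicator_Ico B hck hk, hsum] at this
      linarith
    · simpa using hd c
  have hdown : ∀ c k, c ≤ k → k ≤ n + 1 → dlo k - dhi c ≤ ∑ j ∈ Ico c k, v j := by
    intro c k hck hk
    rcases hck.lt_or_eq with hck | rfl
    · have := pathObjDir_nonneg hB (fun j => if j ∈ Ico c k then -1 else 0)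
      have hsum : ∑ j ∈ Ico c k, (-(Y j - B j) * -1 + kinkDir p q (B j) (-1)) =
          ∑ j ∈ Ico c k, v j :=
        sum_congr rfl fun j _ => by simp only [v, kinkDir_neg_one]; ring
      rw [pathObjDir_indicator_Ico B hck hk, hsum, neg_neg] at this
      linarith
    · simpa using hd c
  obtain ⟨γ, hγ, hγI, hγd⟩ := exists_path_of_windows (lo := dlo) (hi := dhi) (N := n + 1)
    (fun k _ => by simp only [u, v]; linarith [lslope_le_rslope hpq (B k)]) hup hdown 0
    fun c hc => ⟨by linarith [hup c (n + 1) hc le_rfl], by linarith [hdown c (n + 1) hc le_rfl]⟩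
  refine ⟨γ, ?_, hγ, fun k hk => ?_, fun j hj => ?_⟩
  · simpa [dlo, dhi, boundaryDir] using hγI 0 (Nat.zero_le _)
  · simpa [dlo, dhi, boundaryDir, hk, kinkSubdiff] using hγI (k + 1) (by omega)
  · have := hγd j (by omega)
    simp only [u, v, Set.mem_Icc, kinkSubdiff] at this ⊢
    constructor <;> linarith

end PathObjective

section Comparison

lemma exists_basin {A : ℕ → ℝ} {n e : ℕ} {θ : ℝ} (hθ : θ < 0) (hA0 : A 0 = 0)
    (hAn : A (n + 1) = 0) (he : e < n) (hAe : A (e + 1) ≤ θ) :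
    ∃ c d, c ≤ e ∧ e < d ∧ d ≤ n ∧ A (c + 1) ≤ A c ∧ A d ≤ A (d + 1) ∧
      ∀ m, c < m → m ≤ d → m ≠ e + 1 → A m < θ := by
  have hc : ∃ c, c ≤ e ∧ A (c + 1) ≤ A c := by
    by_contra! h
    have hmono : StrictMonoOn A (Set.Icc 0 (e + 1)) :=
      strictMonoOn_of_lt_add_one Set.ordConnected_Icc fun a _ _ ⟨_, ha⟩ => h a (by omega)
    linarith [hmono (by simp) (by simp) (Nat.succ_pos e)]
  have hd : ∃ d, e < d ∧ d ≤ n ∧ A d ≤ A (d + 1) := by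
    by_contra! h
    have hanti : StrictAntiOn A (Set.Icc (e + 1) (n + 1)) :=
      strictAntiOn_of_add_one_lt Set.ordConnected_Icc fun a _ ⟨ha, _⟩ ⟨_, ha'⟩ =>
        h a (by omega) (by omega)
    linarith [hanti ⟨le_rfl, by omega⟩ ⟨by omega, le_rfl⟩ (by omega : e + 1 < n + 1)]
  obtain ⟨c₀, hc₀e, hc₀⟩ := hc
  obtain ⟨c, hce, hAc, hcmax⟩ : ∃ c, c ≤ e ∧ A (c + 1) ≤ A c ∧
      ∀ m, c < m → m ≤ e → A m < A (m + 1) :=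
    ⟨_, Nat.findGreatest_le e,
      Nat.findGreatest_spec (P := fun c => A (c + 1) ≤ A c) hc₀e hc₀,
      fun m h1 h2 => lt_of_not_ge (Nat.findGreatest_is_greatest h1 h2)⟩
  obtain ⟨d, ⟨hed, hdn, hAd⟩, hdmin⟩ : ∃ d, (e < d ∧ d ≤ n ∧ A d ≤ A (d + 1)) ∧
      ∀ m < d, ¬(e < m ∧ m ≤ n ∧ A m ≤ A (m + 1)) :=
    ⟨Nat.find hd, Nat.find_spec hd, fun m hm => Nat.find_min hd hm⟩
  refine ⟨c, d, hce, hed, hdn, hAc, hAd, fun m hcm hmd hme => ?_⟩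
  rcases lt_or_gt_of_ne hme with hm | hm
  · have hmono : StrictMonoOn A (Set.Icc (c + 1) (e + 1)) :=
      strictMonoOn_of_lt_add_one Set.ordConnected_Icc fun a _ ⟨ha, _⟩ ⟨_, ha'⟩ =>
        hcmax a (by omega) (by omega)
    linarith [hmono ⟨by omega, by omega⟩ ⟨by omega, le_rfl⟩ hm]
  · have hanti : StrictAntiOn A (Set.Icc (e + 1) d) :=
      strictAntiOn_of_add_one_lt Set.ordConnected_Icc fun a _ ⟨ha, _⟩ ⟨_, ha'⟩ =>
        lt_of_not_ge fun h => hdmin a (by omega) ⟨by omega, by omega, h⟩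
    linarith [hanti ⟨le_rfl, by omega⟩ ⟨by omega, hmd⟩ hm]

theorem le_succ_of_dual_comparison {n e : ℕ} {θ : ℝ} {A B B' : ℕ → ℝ} (hθ : θ < 0)
    (hA0 : A 0 = 0) (hAn : A (n + 1) = 0) (he : e < n) (hAe : A (e + 1) ≤ θ)
    (hB'up : ∀ k < n, B' k < B' (k + 1) → θ < A (k + 1))
    (hBdown : ∀ k < n, B (k + 1) < B k → θ ≤ A (k + 1))
    (hle : ∀ j ≤ n, A j ≤ A (j + 1) → B j ≤ B' j)
    (hge : ∀ j ≤ n, A (j + 1) ≤ A j → B' j ≤ B j)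
    (hfused : B e = B (e + 1)) : B' e ≤ B' (e + 1) := by
  obtain ⟨c, d, hce, hed, hdn, hAc, hAd, hAlt⟩ := exists_basin hθ hA0 hAn he hAe
  have hAle : ∀ m, c < m → m ≤ d → A m ≤ θ := fun m h1 h2 => by
    rcases eq_or_ne m (e + 1) with rfl | hm
    · exact hAe
    · exact (hAlt m h1 h2 hm).le
  have hB' : AntitoneOn B' (Set.Icc c d) :=
    antitoneOn_of_add_one_le Set.ordConnected_Icc fun k _ ⟨hck, _⟩ ⟨_, hkd⟩ =>
      le_of_not_gt fun h => by linarith [hB'up k (by omega) h, hAle (k + 1) (by omega) hkd]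
  have hB : MonotoneOn B (Set.Icc c d) :=
    monotoneOn_of_le_add_one Set.ordConnected_Icc fun k _ ⟨hck, _⟩ ⟨_, hkd⟩ => by
      rcases eq_or_ne k e with rfl | hke
      · exact hfused.le
      exact le_of_not_gt fun h => by
        linarith [hBdown k (by omega) h, hAlt (k + 1) (by omega) hkd (by omega)]
  have hmem : ∀ {m}, c ≤ m → m ≤ d → m ∈ Set.Icc c d := fun h1 h2 => ⟨h1, h2⟩
  calc B' e ≤ B' c := hB' (hmem le_rfl (by omega)) (hmem hce (by omega)) hce
    _ ≤ B c := hge c (by omega) hAc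
    _ ≤ B d := hB (hmem le_rfl (by omega)) (hmem (by omega) le_rfl) (by omega)
    _ ≤ B' d := hle d hdn hAd
    _ ≤ B' (e + 1) := hB' (hmem (by omega) (by omega)) (hmem (by omega) le_rfl) hed

variable {n : ℕ} {Y : ℕ → ℝ} {p q lo hi lo' hi' : ℝ}

theorem le_succ_of_fused (hpq : p ≤ q) (hlohi : lo ≤ hi) (hlo : lo' ≤ lo) (hhi : hi < hi')
    {B B' : ℕ → ℝ}
    (hB : ∀ C, pathObj n Y p q lo hi B ≤ pathObj n Y p q lo hi C)
    (hB' : ∀ C, pathObj n Y p q lo' hi' B' ≤ pathObj n Y p q lo' hi' C)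
    {e : ℕ} (he : e < n) (hfused : B e = B (e + 1)) : B' e ≤ B' (e + 1) := by
  have hlohi' : lo' ≤ hi' := by linarith
  obtain ⟨γ, hγ0, hγn, hγe, hγv⟩ := exists_dual_of_isMin hpq hlohi hB
  obtain ⟨γ', hγ'0, hγ'n, hγ'e, hγ'v⟩ := exists_dual_of_isMin hpq hlohi' hB'
  by_contra! hsplit
  refine not_le_of_gt hsplit (le_succ_of_dual_comparison (A := γ - γ') (θ := hi - hi')
    (by linarith) (by simp [hγ0, hγ'0]) (by simp [hγn, hγ'n]) he ?_ ?_ ?_ ?_ ?_ hfused)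
  · have h1 := (kinkSubdiff_subset hlohi _ (hγe e he)).2
    have h2 : γ' (e + 1) = hi' := by
      simpa [kinkSubdiff_of_pos (sub_pos.2 hsplit)] using hγ'e e he
    simp only [Pi.sub_apply]
    linarith
  · intro k hk hup
    have h1 := (kinkSubdiff_subset hlohi _ (hγe k hk)).1
    have h2 : γ' (k + 1) = lo' := by
      simpa [kinkSubdiff_of_neg (sub_neg.2 hup)] using hγ'e k hk
    simp only [Pi.sub_apply]
    linarith
  · intro k hk hdown
    have h1 : γ (k + 1) = hi := by
      simpa [kinkSubdiff_of_pos (sub_pos.2 hdown)] using hγe k hk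
    have h2 := (kinkSubdiff_subset hlohi' _ (hγ'e k hk)).2
    simp only [Pi.sub_apply]
    linarith
  · intro j hj hA
    simp only [Pi.sub_apply] at hA
    exact le_of_add_le_add_of_mem_kinkSubdiff hpq (hγv j hj) (hγ'v j hj) (by linarith)
  · intro j hj hA
    simp only [Pi.sub_apply] at hA
    exact le_of_add_le_add_of_mem_kinkSubdiff hpq (hγ'v j hj) (hγv j hj) (by linarith)

lemma pathObj_neg (B : ℕ → ℝ) :
    pathObj n (-Y) (-q) (-p) (-hi) (-lo) B = pathObj n Y p q lo hi (-B) := by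
  simp only [pathObj, Pi.neg_apply, kink_neg, neg_sub, neg_sub_neg]
  congr 1
  exact sum_congr rfl fun j _ => by ring

lemma isMin_pathObj_neg {B : ℕ → ℝ}
    (hB : ∀ C, pathObj n Y p q lo hi B ≤ pathObj n Y p q lo hi C) (C : ℕ → ℝ) :
    pathObj n (-Y) (-q) (-p) (-hi) (-lo) (-B) ≤ pathObj n (-Y) (-q) (-p) (-hi) (-lo) C := by
  rw [pathObj_neg, pathObj_neg, neg_neg]
  exact hB (-C)

theorem eq_succ_of_fused (hpq : p ≤ q) (hlohi : lo ≤ hi) (hlo : lo' < lo) (hhi : hi < hi')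
    {B B' : ℕ → ℝ}
    (hB : ∀ C, pathObj n Y p q lo hi B ≤ pathObj n Y p q lo hi C)
    (hB' : ∀ C, pathObj n Y p q lo' hi' B' ≤ pathObj n Y p q lo' hi' C)
    {e : ℕ} (he : e < n) (hfused : B e = B (e + 1)) : B' e = B' (e + 1) := by
  refine le_antisymm (le_succ_of_fused hpq hlohi hlo.le hhi hB hB' he hfused) ?_
  have := le_succ_of_fused (neg_le_neg hpq) (neg_le_neg hlohi) (neg_le_neg hhi.le)
    (neg_lt_neg hlo) (isMin_pathObj_neg hB) (isMin_pathObj_neg hB') he (by simp [hfused])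
  simpa using this

end Comparison

lemma flni1_eq_pathObj {n : ℕ} {y β : Fin (n + 1) → ℝ} {Y B : ℕ → ℝ}
    (hY : ∀ i : Fin (n + 1), Y i = y i) (hB : ∀ i : Fin (n + 1), B i = β i) (lF lL lNI : ℝ) :
    flni1 y lF lL lNI β = pathObj n Y (-lL) lL (-lF) (lF + lNI) B := by
  have hcast : ∀ i : Fin n, B i = β i.castSucc := fun i => by simpa using hB i.castSucc
  have hsucc : ∀ i : Fin n, B (i + 1) = β i.succ := fun i => by simpa using hB i.succ
  simp only [flni1, pathObj, kink_neg_self, kink_neg_add, ← Fin.sum_univ_eq_sum_range, hY, hB,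
    hcast, hsucc, sum_add_distrib, mul_sum, one_div_mul_eq_div]
  ring

lemma isMin_pathObj_of_isMin_flni1 {n : ℕ} {y β : Fin (n + 1) → ℝ} {lF lL lNI : ℝ}
    (hβ : ∀ β', flni1 y lF lL lNI β ≤ flni1 y lF lL lNI β') (C : ℕ → ℝ) :
    pathObj n (Function.extend Fin.val y 0) (-lL) lL (-lF) (lF + lNI)
        (Function.extend Fin.val β 0) ≤
      pathObj n (Function.extend Fin.val y 0) (-lL) lL (-lF) (lF + lNI) C := by
  have hY := Fin.val_injective.extend_apply y 0
  simpa only [flni1_eq_pathObj hY (Fin.val_injective.extend_apply β 0),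
    flni1_eq_pathObj hY (fun _ => rfl)] using hβ (fun i => C i)

end

end FusedLassoNI

/-- Increasing the fusion penalty `λ_F` can only join constant regions of the
one-dimensional fused lasso nearly-isotonic solution, not split them. -/
theorem fusionParam_joins_groups {n : ℕ} (y : Fin (n + 1) → ℝ)
    (lL lNI lF lF' : ℝ) (hL : 0 ≤ lL) (hNI : 0 ≤ lNI) (hF : 0 ≤ lF) (hFF : lF < lF')
    (b b' : Fin (n + 1) → ℝ)
    (hb : ∀ β, flni1 y lF lL lNI b ≤ flni1 y lF lL lNI β)
    (hb' : ∀ β, flni1 y lF' lL lNI b' ≤ flni1 y lF' lL lNI β)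
    (i : Fin n) (hjoin : b i.castSucc = b i.succ) :
    b' i.castSucc = b' i.succ := by
  have hext (β : Fin (n + 1) → ℝ) (j : Fin (n + 1)) : Function.extend Fin.val β 0 j = β j :=
    Fin.val_injective.extend_apply β 0 j
  have hfused : Function.extend Fin.val b 0 i = Function.extend Fin.val b 0 (i + 1) := by
    simpa [← hext b i.castSucc, ← hext b i.succ] using hjoin
  have := FusedLassoNI.eq_succ_of_fused (by linarith) (by linarith) (by linarith) (by linarith)
    (FusedLassoNI.isMin_pathObj_of_isMin_flni1 hb)
    (FusedLassoNI.isMin_pathObj_of_isMin_flni1 hb') i.isLt hfused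
  simpa [← hext b' i.castSucc, ← hext b' i.succ] using this
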